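/- Let ψ be a nowhere-vanishing section of a Hermitian Clifford module over a hypersurface Σ with shape operator A and positive mean curvature H, satisfying H γ(X)ψ − γ(AX)ψ − (1/H)X(H)γ(N)ψ = 0 for all tangent vectors X, where γ(X) is skew-adjoint, γ(X)² = −|X|² Id, and γ(X)γ(N) + γ(N)γ(X) = 0 for X tangent. Then A = H·Id, i.e. Σ is totally umbilical. -/

import Mathlib

/-!
Put `v = A x - H x`. The hypothesis says that `γ(v)ψ` is a real multiple `c γ(N)ψ`. Since
`γ(v)` and `γ(N)` are skew-adjoint and anticommute, `⟪γ(v)ψ, γ(N)ψ⟫ = -⟪γ(N)ψ, γ(v)ψ⟫`,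
so `‖γ(v)ψ‖² = c ⟪γ(v)ψ, γ(N)ψ⟫` equals its own negative and `γ(v)ψ = 0`. Then
`0 = γ(v)²ψ = -‖v‖² ψ` with `ψ ≠ 0` gives `v = 0`.
-/

section SkewAnticommuting

variable {W : Type*} [NormedAddCommGroup W] [InnerProductSpace ℂ W] {S T : W →ₗ[ℂ] W}

theorem inner_apply_eq_neg_inner_of_anticomm
    (hT : ∀ φ χ : W, inner ℂ (T φ) χ = -inner ℂ φ (T χ))
    (hS : ∀ φ χ : W, inner ℂ (S φ) χ = -inner ℂ φ (S χ))
    (hTS : T ∘ₗ S + S ∘ₗ T = 0) (ψ : W) :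
    inner ℂ (T ψ) (S ψ) = -inner ℂ (S ψ) (T ψ) := by
  have hST : T (S ψ) = -S (T ψ) := eq_neg_of_add_eq_zero_left congr($hTS ψ)
  rw [hT, hST, inner_neg_right, neg_neg, hS, neg_neg]

theorem apply_eq_zero_of_eq_ofReal_smul_of_anticomm
    (hT : ∀ φ χ : W, inner ℂ (T φ) χ = -inner ℂ φ (T χ))
    (hS : ∀ φ χ : W, inner ℂ (S φ) χ = -inner ℂ φ (S χ))
    (hTS : T ∘ₗ S + S ∘ₗ T = 0) {ψ : W} {c : ℝ} (h : T ψ = (c : ℂ) • S ψ) :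
    T ψ = 0 := by
  have h₁ : inner ℂ (T ψ) (T ψ) = c * inner ℂ (T ψ) (S ψ) := by
    nth_rw 2 [h]; rw [inner_smul_right]
  have h₂ : inner ℂ (T ψ) (T ψ) = -(c * inner ℂ (T ψ) (S ψ)) := by
    nth_rw 1 [h]
    rw [inner_smul_left, Complex.conj_ofReal, inner_apply_eq_neg_inner_of_anticomm hT hS hTS,
      mul_neg, neg_neg]
  exact (inner_self_eq_zero (𝕜 := ℂ)).mp (by linear_combination (h₁ + h₂) / 2)

end SkewAnticommuting

theorem eq_zero_of_clifford_apply_eq_zero {E W : Type*} [NormedAddCommGroup E]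
    [AddCommGroup W] [Module ℂ W] {T : W →ₗ[ℂ] W} {x : E}
    (hT : T ∘ₗ T = -((‖x‖ : ℂ) ^ 2) • LinearMap.id) {ψ : W} (hψ : ψ ≠ 0) (h : T ψ = 0) :
    x = 0 := by
  have hsq : (0 : W) = -((‖x‖ : ℂ) ^ 2 • ψ) := by
    simpa [h] using congr($hT ψ)
  simpa [hψ] using hsq.symm

theorem stmt17_general {E W : Type*} [NormedAddCommGroup E] [InnerProductSpace ℝ E]
    [NormedAddCommGroup W] [InnerProductSpace ℂ W]
    (γ : E →ₗ[ℝ] (W →ₗ[ℂ] W)) (γN : W →ₗ[ℂ] W)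
    (hskew : ∀ (x : E) (φ χ : W), (inner ℂ (γ x φ) χ : ℂ) = -inner ℂ φ (γ x χ))
    (hNskew : ∀ (φ χ : W), (inner ℂ (γN φ) χ : ℂ) = -inner ℂ φ (γN χ))
    (hsq : ∀ x : E, γ x ∘ₗ γ x = -((‖x‖ : ℂ) ^ 2) • LinearMap.id)
    (hanti : ∀ x : E, γ x ∘ₗ γN + γN ∘ₗ γ x = 0)
    (A : E →ₗ[ℝ] E)
    (H : ℝ)
    (dH : E →ₗ[ℝ] ℝ)
    (ψ : W) (hψ : ψ ≠ 0)
    (heq : ∀ x : E,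
      (H : ℂ) • γ x ψ - γ (A x) ψ - ((dH x / H : ℝ) : ℂ) • γN ψ = 0) :
    ∀ x : E, A x = H • x := by
  intro x
  have hv : γ (A x - H • x) ψ = ((-(dH x / H) : ℝ) : ℂ) • γN ψ := by
    rw [map_sub, map_smul, LinearMap.sub_apply, LinearMap.smul_apply, ← Complex.coe_smul]
    push_cast
    linear_combination (norm := module) -heq x
  have hv₀ : γ (A x - H • x) ψ = 0 :=
    apply_eq_zero_of_eq_ofReal_smul_of_anticomm (hskew _) hNskew (hanti _) hv
  exact sub_eq_zero.mp (eq_zero_of_clifford_apply_eq_zero (hsq _) hψ hv₀)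

/-- Let `ψ ≠ 0` be a vector of a Hermitian Clifford module over (the
tangent space at a point of) a hypersurface `Σ`, with Clifford multiplication `γ`
(skew-adjoint, `γ(x)² = -‖x‖² Id`, anticommuting with `γ(N)`), symmetric shape operator
`A`, mean curvature `H > 0`, and suppose
`H γ(x) ψ - γ(A x) ψ - (1/H) dH(x) γ(N) ψ = 0` for all tangent vectors `x`.
Then `A = H · Id`, i.e. `Σ` is totally umbilical. -/
theorem stmt17 {E W : Type*} [NormedAddCommGroup E] [InnerProductSpace ℝ E]
    [FiniteDimensional ℝ E]
    [NormedAddCommGroup W] [InnerProductSpace ℂ W]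
    (γ : E →ₗ[ℝ] (W →ₗ[ℂ] W)) (γN : W →ₗ[ℂ] W)
    (hskew : ∀ (x : E) (φ χ : W), (inner ℂ (γ x φ) χ : ℂ) = -inner ℂ φ (γ x χ))
    (hNskew : ∀ (φ χ : W), (inner ℂ (γN φ) χ : ℂ) = -inner ℂ φ (γN χ))
    (hsq : ∀ x : E, γ x ∘ₗ γ x = -((‖x‖ : ℂ) ^ 2) • LinearMap.id)
    (hanti : ∀ x : E, γ x ∘ₗ γN + γN ∘ₗ γ x = 0)
    (A : E →ₗ[ℝ] E) (hAsym : ∀ x y : E, (inner ℝ (A x) y : ℝ) = inner ℝ x (A y))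
    (H : ℝ) (hH : 0 < H)
    (dH : E →ₗ[ℝ] ℝ)
    (ψ : W) (hψ : ψ ≠ 0)
    (heq : ∀ x : E,
      (H : ℂ) • γ x ψ - γ (A x) ψ - ((dH x / H : ℝ) : ℂ) • γN ψ = 0) :
    ∀ x : E, A x = H • x :=
  stmt17_general γ γN hskew hNskew hsq hanti A H dH ψ hψ heq
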